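/- Let {X_k}_{k≥0} be a sequence with X₀ = 0 such that, for every k ≥ 0, X_{k+1} is a minimal nonnegative solution of X = Σ_{ℓ=−1}^q A_ℓ(X_k) X^{ℓ+1}, and let G be the minimal nonnegative solution of X = Σ_{i=0}^∞ A_{i−1} Xⁱ. Set ε_k = (G − X_k)·1. Then for every k ≥ 0 one has M ε_{k+1} ≤ N ε_k entrywise, where M = I − F, F = Σ_{ℓ=0}^q A_ℓ(G) Σ_{j=0}^ℓ G^j, and N = Σ_{ℓ=−1}^q Σ_{i=1}^∞ A_{ℓ,i} Σ_{j=0}^{i−1} G^j. -/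

import Mathlib

/-!
Every `X_k` lies in the order interval `[0, G]`, and `G·1 ≤ 1`: the maps `X ↦ ∑ A_{i-1} Xⁱ` and
`Z ↦ ∑_ℓ A_ℓ(X_k) Z^{ℓ+1}` are monotone and continuous on `[0, G]`, so their iterates from `0`
increase to a fixed point in `[0, G]` (for the first map one with row sums at most `1`), and
minimality compares with that fixed point.

Subtracting the equations of `G` and `X_{k+1}` gives
`G - X_{k+1} = ∑_ℓ A_ℓ(G) (G^{ℓ+1} - X_{k+1}^{ℓ+1}) + ∑_ℓ (A_ℓ(G) - A_ℓ(X_k)) X_{k+1}^{ℓ+1}`.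
On the vector `1`, the telescoping `Gⁿ - Yⁿ = ∑_j G^j (G - Y) Y^{n-1-j}` together with `Yʳ·1 ≤ 1`
bounds the first sum by `F ε_{k+1}` and, term by term in the power series `A_ℓ`, the second one
by `N ε_k`.
-/

open Matrix

/-- Entrywise order on square real matrices. -/
def Mle {m : ℕ} (X Y : Matrix (Fin m) (Fin m) ℝ) : Prop := ∀ i j, X i j ≤ Y i j

/-- `G` is the minimal nonnegative solution of `X = ∑_{i=0}^∞ A_{i-1} Xⁱ`. -/
def IsMinSol {m : ℕ} (A : ℕ → Matrix (Fin m) (Fin m) ℝ)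
    (G : Matrix (Fin m) (Fin m) ℝ) : Prop :=
  Mle 0 G ∧ Summable (fun i => A i * G ^ i) ∧ G = ∑' i, A i * G ^ i ∧
    ∀ Y, Mle 0 Y → Summable (fun i => A i * Y ^ i) → Y = ∑' i, A i * Y ^ i → Mle G Y

/-- Minimal nonnegative solution of `Z = ∑_{ℓ=-1}^q C_ℓ Z^{ℓ+1}` (shifted index). -/
def IsMinPolySol {m : ℕ} (p : ℕ) (C : ℕ → Matrix (Fin m) (Fin m) ℝ)
    (Z : Matrix (Fin m) (Fin m) ℝ) : Prop :=
  Mle 0 Z ∧ Z = ∑ ℓ ∈ Finset.range (p + 1), C ℓ * Z ^ ℓ ∧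
    ∀ Y, Mle 0 Y → Y = ∑ ℓ ∈ Finset.range (p + 1), C ℓ * Y ^ ℓ → Mle Z Y

open Filter Topology

section
variable {m : ℕ}
local notation "𝕄" => Matrix (Fin m) (Fin m) ℝ

theorem HasSum.matrix_apply {F : ℕ → 𝕄} {a : 𝕄} (hF : HasSum F a) (i j : Fin m) :
    HasSum (fun n => F n i j) (a i j) :=
  Pi.hasSum.1 (Pi.hasSum.1 hF i) j

namespace Mle

theorem refl (X : 𝕄) : Mle X X := fun _ _ => le_rfl

theorem trans {X Y Z : 𝕄} (hXY : Mle X Y) (hYZ : Mle Y Z) : Mle X Z :=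
  fun i j => (hXY i j).trans (hYZ i j)

theorem sub_nonneg {X Y : 𝕄} (h : Mle X Y) : Mle 0 (Y - X) :=
  fun i j => _root_.sub_nonneg.2 (h i j)

theorem mul {A B X Y : 𝕄} (hA : Mle 0 A) (hAB : Mle A B) (hX : Mle 0 X) (hXY : Mle X Y) :
    Mle (A * X) (B * Y) := fun i j => by
  simp only [mul_apply]
  exact Finset.sum_le_sum fun k _ =>
    mul_le_mul (hAB i k) (hXY k j) (hX k j) ((hA i k).trans (hAB i k))

theorem mul_nonneg {X Y : 𝕄} (hX : Mle 0 X) (hY : Mle 0 Y) : Mle 0 (X * Y) := by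
  simpa using mul (refl 0) hX (refl 0) hY

theorem pow_nonneg {X : 𝕄} (hX : Mle 0 X) (n : ℕ) : Mle 0 (X ^ n) := by
  induction n with
  | zero => intro i j; by_cases h : i = j <;> simp [one_apply, h]
  | succ n ih => rw [pow_succ]; exact ih.mul_nonneg hX

theorem pow {X Y : 𝕄} (hX : Mle 0 X) (hXY : Mle X Y) (n : ℕ) : Mle (X ^ n) (Y ^ n) := by
  induction n with
  | zero => exact refl 1
  | succ n ih => rw [pow_succ, pow_succ]; exact mul (pow_nonneg hX n) ih hX hXY

theorem sum {s : Finset ℕ} {F H : ℕ → 𝕄} (h : ∀ n ∈ s, Mle (F n) (H n)) :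
    Mle (∑ n ∈ s, F n) (∑ n ∈ s, H n) := fun i j => by
  simp only [Matrix.sum_apply]
  exact Finset.sum_le_sum fun n hn => h n hn i j

theorem hasSum {F H : ℕ → 𝕄} {a b : 𝕄} (h : ∀ n, Mle (F n) (H n)) (hF : HasSum F a)
    (hH : HasSum H b) : Mle a b := fun i j =>
  hasSum_le (fun n => h n i j) (hF.matrix_apply i j) (hH.matrix_apply i j)

theorem mulVec_le_mulVec {A : 𝕄} {v w : Fin m → ℝ} (hA : Mle 0 A) (hvw : v ≤ w) :
    A *ᵥ v ≤ A *ᵥ w := fun i => by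
  simp only [mulVec, dotProduct]
  exact Finset.sum_le_sum fun j _ => mul_le_mul_of_nonneg_left (hvw j) (hA i j)

theorem mulVec_le_mulVec_of_nonneg {A B : 𝕄} {v : Fin m → ℝ} (hAB : Mle A B) (hv : 0 ≤ v) :
    A *ᵥ v ≤ B *ᵥ v := fun i => by
  simp only [mulVec, dotProduct]
  exact Finset.sum_le_sum fun j _ => mul_le_mul_of_nonneg_right (hAB i j) (hv j)

end Mle

theorem summable_of_mle {F H : ℕ → 𝕄} (h0 : ∀ n, Mle 0 (F n)) (h : ∀ n, Mle (F n) (H n))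
    (hH : Summable H) : Summable F :=
  Pi.summable.2 fun i => Pi.summable.2 fun j =>
    (Pi.summable.1 (Pi.summable.1 hH i) j).of_nonneg_of_le (fun n => h0 n i j) (fun n => h n i j)

theorem isClosed_setOf_mle {α : Type*} [TopologicalSpace α] {f g : α → 𝕄} (hf : Continuous f)
    (hg : Continuous g) : IsClosed {x | Mle (f x) (g x)} := by
  simp only [Mle, Set.ofPred_forall]
  exact isClosed_iInter fun i => isClosed_iInter fun j => isClosed_le (by fun_prop) (by fun_prop)

theorem HasSum.matrix_mulVec {F : ℕ → 𝕄} {a : 𝕄} (hF : HasSum F a) (v : Fin m → ℝ) :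
    HasSum (fun n => F n *ᵥ v) (a *ᵥ v) :=
  hF.map (mulVec.addMonoidHomLeft v) (continuous_id.matrix_mulVec continuous_const)

theorem pow_mulVec_one_le {X : 𝕄} (hX : Mle 0 X) (hX1 : X *ᵥ 1 ≤ 1) (n : ℕ) :
    X ^ n *ᵥ 1 ≤ 1 := by
  induction n with
  | zero => simp
  | succ n ih =>
    rw [pow_succ, ← mulVec_mulVec]
    exact ((Mle.pow_nonneg hX n).mulVec_le_mulVec hX1).trans ih

theorem pow_sub_pow_mulVec_one_le {G Y : 𝕄} (hG0 : Mle 0 G) (hY0 : Mle 0 Y) (hYG : Mle Y G)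
    (hY1 : Y *ᵥ 1 ≤ 1) (n : ℕ) :
    (G ^ n - Y ^ n) *ᵥ 1 ≤ (∑ j ∈ Finset.range n, G ^ j) *ᵥ ((G - Y) *ᵥ 1) := by
  induction n with
  | zero => simp
  | succ n ih =>
    have hsplit : G ^ (n + 1) - Y ^ (n + 1) = G * (G ^ n - Y ^ n) + (G - Y) * Y ^ n := by
      rw [pow_succ', pow_succ', mul_sub, sub_mul]; abel
    calc (G ^ (n + 1) - Y ^ (n + 1)) *ᵥ 1
        = G *ᵥ ((G ^ n - Y ^ n) *ᵥ 1) + (G - Y) *ᵥ (Y ^ n *ᵥ 1) := by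
          rw [hsplit, add_mulVec, mulVec_mulVec, mulVec_mulVec]
      _ ≤ G *ᵥ ((∑ j ∈ Finset.range n, G ^ j) *ᵥ ((G - Y) *ᵥ 1)) + (G - Y) *ᵥ 1 :=
          add_le_add (hG0.mulVec_le_mulVec ih)
            (hYG.sub_nonneg.mulVec_le_mulVec (pow_mulVec_one_le hY0 hY1 n))
      _ = (∑ j ∈ Finset.range (n + 1), G ^ j) *ᵥ ((G - Y) *ᵥ 1) := by
          rw [geom_sum_succ, add_mulVec, one_mulVec, mulVec_mulVec]

theorem exists_fixedPoint_of_mle {S : Set 𝕄} {f : 𝕄 → 𝕄} {G : 𝕄} (hS : IsClosed S) (h0 : 0 ∈ S)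
    (hf0 : Mle 0 (f 0)) (hfS : Set.MapsTo f S S)
    (hmono : ∀ X ∈ S, ∀ Y ∈ S, Mle X Y → Mle (f X) (f Y)) (hcont : ContinuousOn f S)
    (hbdd : ∀ X ∈ S, Mle X G) : ∃ L ∈ S, f L = L := by
  set g : ℕ → 𝕄 := fun n => f^[n] 0
  have hgS : ∀ n, g n ∈ S := fun n => hfS.iterate n h0
  have hg_succ : ∀ n, g (n + 1) = f (g n) := fun n => Function.iterate_succ_apply' f n 0
  have hg_mono : ∀ n, Mle (g n) (g (n + 1)) := by
    intro n
    induction n with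
    | zero => exact hf0
    | succ n ih => simpa only [hg_succ] using hmono _ (hgS n) _ (hgS (n + 1)) ih
  -- entrywise monotone convergence, read in the product order of `Fin m → Fin m → ℝ`
  obtain ⟨L, hL⟩ : ∃ L, Tendsto g atTop (𝓝 L) :=
    ⟨_, tendsto_atTop_ciSup (α := Fin m → Fin m → ℝ) (f := g)
      (monotone_nat_of_le_succ hg_mono) ⟨G, by rintro _ ⟨n, rfl⟩; exact hbdd _ (hgS n)⟩⟩
  have hLS : L ∈ S := hS.mem_of_tendsto hL (Eventually.of_forall hgS)
  refine ⟨L, hLS, tendsto_nhds_unique (f := fun n => f (g n)) (l := atTop) ?_ ?_⟩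
  · exact (hcont L hLS).tendsto.comp (tendsto_nhdsWithin_iff.2 ⟨hL, Eventually.of_forall hgS⟩)
  · simpa only [Function.comp_def, hg_succ] using hL.comp (tendsto_add_atTop_nat 1)

section PowerSeries

variable {a : ℕ → Matrix (Fin m) (Fin m) ℝ}

theorem summable_mul_pow_of_mle (ha : ∀ i, Mle 0 (a i)) {X Y : 𝕄} (hX : Mle 0 X)
    (hXY : Mle X Y) (hY : Summable fun i => a i * Y ^ i) : Summable fun i => a i * X ^ i :=
  summable_of_mle (fun i => (ha i).mul_nonneg (hX.pow_nonneg i))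
    (fun i => (ha i).mul (.refl _) (hX.pow_nonneg i) (hX.pow hXY i)) hY

theorem tsum_mul_pow_mle (ha : ∀ i, Mle 0 (a i)) {X Y : 𝕄} (hX : Mle 0 X) (hXY : Mle X Y)
    (hY : Summable fun i => a i * Y ^ i) :
    Mle (∑' i, a i * X ^ i) (∑' i, a i * Y ^ i) :=
  Mle.hasSum (fun i => (ha i).mul (.refl _) (hX.pow_nonneg i) (hX.pow hXY i))
    (summable_mul_pow_of_mle ha hX hXY hY).hasSum hY.hasSum

theorem tsum_mul_pow_nonneg (ha : ∀ i, Mle 0 (a i)) {X : 𝕄} (hX : Mle 0 X) :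
    Mle 0 (∑' i, a i * X ^ i) := by
  by_cases hs : Summable fun i => a i * X ^ i
  · exact Mle.hasSum (fun i => (ha i).mul_nonneg (hX.pow_nonneg i)) hasSum_zero hs.hasSum
  · rw [tsum_eq_zero_of_not_summable hs]; exact .refl 0

theorem continuousOn_tsum_mul_pow (ha : ∀ i, Mle 0 (a i)) {G : 𝕄}
    (hG : Summable fun i => a i * G ^ i) :
    ContinuousOn (fun X => ∑' i, a i * X ^ i) {X | Mle 0 X ∧ Mle X G} := by
  refine continuousOn_pi.2 fun k => continuousOn_pi.2 fun j => ?_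
  have hentry : Set.EqOn (fun X : 𝕄 => (∑' i, a i * X ^ i) k j)
      (fun X => ∑' i, (a i * X ^ i) k j) {X | Mle 0 X ∧ Mle X G} := fun X hX =>
    ((summable_mul_pow_of_mle ha hX.1 hX.2 hG).hasSum.matrix_apply k j).tsum_eq.symm
  refine ContinuousOn.congr ?_ hentry
  refine continuousOn_tsum (u := fun i => (a i * G ^ i) k j) (fun i => by fun_prop)
    (hG.hasSum.matrix_apply k j).summable fun i X hX => ?_
  rw [Real.norm_of_nonneg (((ha i).mul_nonneg (hX.1.pow_nonneg i)) k j)]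
  exact (ha i).mul (.refl _) (hX.1.pow_nonneg i) (hX.1.pow hX.2 i) k j

theorem tsum_mul_pow_mulVec_one_le (ha : ∀ i, Mle 0 (a i)) (hsa : Summable a) {X : 𝕄}
    (hX : Mle 0 X) (hX1 : X *ᵥ 1 ≤ 1) (hs : Summable fun i => a i * X ^ i) :
    (∑' i, a i * X ^ i) *ᵥ 1 ≤ (∑' i, a i) *ᵥ 1 :=
  hasSum_le (fun i => by
      rw [← mulVec_mulVec]; exact (ha i).mulVec_le_mulVec (pow_mulVec_one_le hX hX1 i))
    (hs.hasSum.matrix_mulVec 1) (hsa.hasSum.matrix_mulVec 1)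

theorem tsum_mul_pow_sub_mulVec_one_le (ha : ∀ i, Mle 0 (a i)) {G W : 𝕄}
    (hG0 : Mle 0 G) (hW0 : Mle 0 W) (hWG : Mle W G) (hW1 : W *ᵥ 1 ≤ 1)
    (hsG : Summable fun i => a i * G ^ i)
    (hsN : Summable fun i => a (i + 1) * ∑ j ∈ Finset.range (i + 1), G ^ j) :
    ((∑' i, a i * G ^ i) - ∑' i, a i * W ^ i) *ᵥ 1 ≤
      (∑' i, a (i + 1) * ∑ j ∈ Finset.range (i + 1), G ^ j) *ᵥ ((G - W) *ᵥ 1) := by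
  have hdiff : HasSum (fun i => a i *ᵥ ((G ^ i - W ^ i) *ᵥ 1))
      (((∑' i, a i * G ^ i) - ∑' i, a i * W ^ i) *ᵥ 1) := by
    simpa only [← mul_sub, ← mulVec_mulVec] using
      (hsG.hasSum.sub (summable_mul_pow_of_mle ha hW0 hWG hsG).hasSum).matrix_mulVec 1
  -- the `i = 0` term vanishes, so the series may start at `i = 1`
  have hdiff_succ : HasSum (fun i => a (i + 1) *ᵥ ((G ^ (i + 1) - W ^ (i + 1)) *ᵥ 1))
      (((∑' i, a i * G ^ i) - ∑' i, a i * W ^ i) *ᵥ 1) := by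
    simpa using (hasSum_nat_add_iff' 1).2 hdiff
  refine hasSum_le (fun i => ?_) hdiff_succ (hsN.hasSum.matrix_mulVec ((G - W) *ᵥ 1))
  simpa [← mulVec_mulVec] using
    (ha (i + 1)).mulVec_le_mulVec (pow_sub_pow_mulVec_one_le hG0 hW0 hWG hW1 (i + 1))

end PowerSeries

theorem IsMinSol.mulVec_one_le {A : ℕ → 𝕄} {G : 𝕄} (hG : IsMinSol A G) (hA0 : ∀ i, Mle 0 (A i))
    (hsum : Summable A) (hrow : (∑' i, A i) *ᵥ 1 ≤ 1) : G *ᵥ 1 ≤ 1 := by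
  obtain ⟨hG0, hsG, hGeq, hGmin⟩ := hG
  set S := {X : 𝕄 | Mle 0 X ∧ Mle X G ∧ X *ᵥ 1 ≤ 1}
  have hS : IsClosed S := (isClosed_setOf_mle continuous_const continuous_id).inter
    ((isClosed_setOf_mle continuous_id continuous_const).inter
      (isClosed_le (continuous_id.matrix_mulVec continuous_const) continuous_const))
  have hsX : ∀ X ∈ S, Summable fun i => A i * X ^ i := fun X hX =>
    summable_mul_pow_of_mle hA0 hX.1 hX.2.1 hsG
  -- `S` carries the row-sum bound through the iteration, so the fixed point found below `G` has it
  obtain ⟨L, hL, hfix⟩ := exists_fixedPoint_of_mle (f := fun X => ∑' i, A i * X ^ i) hS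
    ⟨.refl 0, hG0, by simp⟩ (tsum_mul_pow_nonneg hA0 (.refl 0))
    (fun X hX => ⟨tsum_mul_pow_nonneg hA0 hX.1,
      by simpa only [← hGeq] using tsum_mul_pow_mle hA0 hX.1 hX.2.1 hsG,
      (tsum_mul_pow_mulVec_one_le hA0 hsum hX.1 hX.2.2 (hsX X hX)).trans hrow⟩)
    (fun X hX Y hY hXY => tsum_mul_pow_mle hA0 hX.1 hXY (hsX Y hY))
    ((continuousOn_tsum_mul_pow hA0 hsG).mono fun X hX => ⟨hX.1, hX.2.1⟩)
    fun X hX => hX.2.1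
  have hGL : Mle G L := hGmin L hL.1 (hsX L hL) hfix.symm
  exact (hGL.mulVec_le_mulVec_of_nonneg fun _ => zero_le_one).trans hL.2.2

theorem IsMinPolySol.mle {p : ℕ} {B C : ℕ → 𝕄} {G Z : 𝕄} (hZ : IsMinPolySol p C Z)
    (hC0 : ∀ ℓ, Mle 0 (C ℓ)) (hCB : ∀ ℓ, Mle (C ℓ) (B ℓ)) (hG0 : Mle 0 G)
    (hG : G = ∑ ℓ ∈ Finset.range (p + 1), B ℓ * G ^ ℓ) : Mle Z G := by
  set f : 𝕄 → 𝕄 := fun X => ∑ ℓ ∈ Finset.range (p + 1), C ℓ * X ^ ℓ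
  have hf_nonneg : ∀ X, Mle 0 X → Mle 0 (f X) := fun X hX => by
    simpa using Mle.sum (F := fun _ => 0) fun ℓ _ => (hC0 ℓ).mul_nonneg (hX.pow_nonneg ℓ)
  have hf_mono : ∀ X Y, Mle 0 X → Mle X Y → Mle (f X) (f Y) := fun X Y hX hXY =>
    Mle.sum fun ℓ _ => (hC0 ℓ).mul (.refl _) (hX.pow_nonneg ℓ) (hX.pow hXY ℓ)
  have hfG : Mle (f G) G := by
    have hfB := Mle.sum (s := Finset.range (p + 1)) fun ℓ _ =>
      (hC0 ℓ).mul (hCB ℓ) (hG0.pow_nonneg ℓ) (.refl (G ^ ℓ))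
    rwa [← hG] at hfB
  obtain ⟨L, hL, hfix⟩ := exists_fixedPoint_of_mle (S := {X | Mle 0 X ∧ Mle X G}) (f := f)
    ((isClosed_setOf_mle continuous_const continuous_id).inter
      (isClosed_setOf_mle continuous_id continuous_const))
    ⟨.refl 0, hG0⟩ (hf_nonneg 0 (.refl 0))
    (fun X hX => ⟨hf_nonneg X hX.1, (hf_mono X G hX.1 hX.2).trans hfG⟩)
    (fun X hX Y _ hXY => hf_mono X Y hX.1 hXY) (by fun_prop) fun X hX => hX.2
  exact (hZ.2.2 L hL.1 hfix.symm).trans hL.2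

theorem hasSum_mul_pow_of_eq_sum_shift {p : ℕ} {A : ℕ → 𝕄} {a : ℕ → ℕ → 𝕄}
    (hA : ∀ i, A i = ∑ ℓ ∈ Finset.range (p + 1), if ℓ ≤ i then a ℓ (i - ℓ) else 0) {X : 𝕄}
    (hs : ∀ ℓ, Summable fun i => a ℓ i * X ^ i) :
    HasSum (fun i => A i * X ^ i) (∑ ℓ ∈ Finset.range (p + 1), (∑' i, a ℓ i * X ^ i) * X ^ ℓ) := by
  have hshift : ∀ ℓ, HasSum (fun i => (if ℓ ≤ i then a ℓ (i - ℓ) else 0) * X ^ i)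
      ((∑' i, a ℓ i * X ^ i) * X ^ ℓ) := fun ℓ => by
    rw [← (add_left_injective ℓ).hasSum_iff]
    · simpa [Function.comp_def, pow_add, mul_assoc] using (hs ℓ).hasSum.mul_right (X ^ ℓ)
    · rintro i hi
      rw [if_neg fun h => hi ⟨i - ℓ, Nat.sub_add_cancel h⟩, zero_mul]
  simpa only [hA, Finset.sum_mul] using hasSum_sum fun ℓ _ => hshift ℓ

theorem iterate_nonneg_and_mle {p : ℕ} {a : ℕ → ℕ → 𝕄} {G : 𝕄} {X : ℕ → 𝕄}
    (ha : ∀ ℓ i, Mle 0 (a ℓ i)) (hG0 : Mle 0 G)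
    (hG : G = ∑ ℓ ∈ Finset.range (p + 1), (∑' i, a ℓ i * G ^ i) * G ^ ℓ)
    (hsG : ∀ ℓ, Summable fun i => a ℓ i * G ^ i) (hX0 : X 0 = 0)
    (hX : ∀ k, IsMinPolySol p (fun ℓ => ∑' i, a ℓ i * X k ^ i) (X (k + 1))) (k : ℕ) :
    Mle 0 (X k) ∧ Mle (X k) G := by
  induction k with
  | zero => rw [hX0]; exact ⟨.refl 0, hG0⟩
  | succ k ih =>
    exact ⟨(hX k).1, (hX k).mle (fun ℓ => tsum_mul_pow_nonneg (ha ℓ) ih.1)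
      (fun ℓ => tsum_mul_pow_mle (ha ℓ) ih.1 ih.2 (hsG ℓ)) hG0 hG⟩

theorem one_sub_mulVec_error_le {p : ℕ} {a : ℕ → ℕ → 𝕄} (ha : ∀ ℓ i, Mle 0 (a ℓ i))
    {G W Y : 𝕄} (hG0 : Mle 0 G) (hG1 : G *ᵥ 1 ≤ 1) (hW0 : Mle 0 W) (hWG : Mle W G)
    (hY0 : Mle 0 Y) (hYG : Mle Y G)
    (hG : G = ∑ ℓ ∈ Finset.range (p + 1), (∑' i, a ℓ i * G ^ i) * G ^ ℓ)
    (hY : Y = ∑ ℓ ∈ Finset.range (p + 1), (∑' i, a ℓ i * W ^ i) * Y ^ ℓ)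
    (hsG : ∀ ℓ, Summable fun i => a ℓ i * G ^ i)
    (hsN : ∀ ℓ, Summable fun i => a ℓ (i + 1) * ∑ j ∈ Finset.range (i + 1), G ^ j) :
    (1 - ∑ ℓ ∈ Finset.range (p + 1), (∑' i, a ℓ i * G ^ i) * ∑ j ∈ Finset.range ℓ, G ^ j) *ᵥ
        ((G - Y) *ᵥ 1) ≤
      (∑ ℓ ∈ Finset.range (p + 1), ∑' i, a ℓ (i + 1) * ∑ j ∈ Finset.range (i + 1), G ^ j) *ᵥ
        ((G - W) *ᵥ 1) := by
  set B : ℕ → 𝕄 := fun ℓ => ∑' i, a ℓ i * G ^ i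
  set C : ℕ → 𝕄 := fun ℓ => ∑' i, a ℓ i * W ^ i
  have hW1 : W *ᵥ 1 ≤ 1 := (hWG.mulVec_le_mulVec_of_nonneg fun _ => zero_le_one).trans hG1
  have hY1 : Y *ᵥ 1 ≤ 1 := (hYG.mulVec_le_mulVec_of_nonneg fun _ => zero_le_one).trans hG1
  have hsplit : G - Y = ∑ ℓ ∈ Finset.range (p + 1), B ℓ * (G ^ ℓ - Y ^ ℓ) +
      ∑ ℓ ∈ Finset.range (p + 1), (B ℓ - C ℓ) * Y ^ ℓ := by
    conv_lhs => rw [hG, hY]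
    rw [← Finset.sum_sub_distrib, ← Finset.sum_add_distrib]
    refine Finset.sum_congr rfl fun ℓ _ => ?_
    noncomm_ring
  rw [sub_mulVec, one_mulVec, sub_le_iff_le_add']
  calc (G - Y) *ᵥ 1
      = ∑ ℓ ∈ Finset.range (p + 1), B ℓ *ᵥ ((G ^ ℓ - Y ^ ℓ) *ᵥ 1) +
          ∑ ℓ ∈ Finset.range (p + 1), (B ℓ - C ℓ) *ᵥ (Y ^ ℓ *ᵥ 1) := by
        simp only [hsplit, add_mulVec, sum_mulVec, mulVec_mulVec]
    _ ≤ ∑ ℓ ∈ Finset.range (p + 1), B ℓ *ᵥ ((∑ j ∈ Finset.range ℓ, G ^ j) *ᵥ ((G - Y) *ᵥ 1)) +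
          ∑ ℓ ∈ Finset.range (p + 1), (B ℓ - C ℓ) *ᵥ 1 := by
        gcongr with ℓ _ ℓ _
        · exact (tsum_mul_pow_nonneg (ha ℓ) hG0).mulVec_le_mulVec
            (pow_sub_pow_mulVec_one_le hG0 hY0 hYG hY1 ℓ)
        · exact (tsum_mul_pow_mle (ha ℓ) hW0 hWG (hsG ℓ)).sub_nonneg.mulVec_le_mulVec
            (pow_mulVec_one_le hY0 hY1 ℓ)
    _ ≤ ∑ ℓ ∈ Finset.range (p + 1), B ℓ *ᵥ ((∑ j ∈ Finset.range ℓ, G ^ j) *ᵥ ((G - Y) *ᵥ 1)) +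
          ∑ ℓ ∈ Finset.range (p + 1),
            (∑' i, a ℓ (i + 1) * ∑ j ∈ Finset.range (i + 1), G ^ j) *ᵥ ((G - W) *ᵥ 1) := by
        gcongr with ℓ _
        exact tsum_mul_pow_sub_mulVec_one_le (ha ℓ) hG0 hW0 hWG hW1 (hsG ℓ) (hsN ℓ)
    _ = _ := by simp only [B, ← mulVec_mulVec, sum_mulVec]

end

/-- Here `A i` denotes `A_{i-1}`, `p = q+1`, `Aℓ ℓ' i` denotes `A_{ℓ'-1, i}`, and `1` is the
all-ones vector. -/
theorem stmt4_general (m : ℕ) (p : ℕ)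
    (A : ℕ → Matrix (Fin m) (Fin m) ℝ)
    (Aℓ : ℕ → ℕ → Matrix (Fin m) (Fin m) ℝ)
    (hA0 : ∀ i, Mle 0 (A i)) (hAℓ0 : ∀ ℓ i, Mle 0 (Aℓ ℓ i))
    (hsum : Summable A)
    (hrow : ∀ k, ∑ j, (∑' i, A i) k j ≤ 1)
    (hcompat : ∀ i, A i = ∑ ℓ ∈ Finset.range (p + 1),
      if ℓ ≤ i then Aℓ ℓ (i - ℓ) else 0)
    (G : Matrix (Fin m) (Fin m) ℝ) (hG : IsMinSol A G)
    -- all series occurring converge entrywise: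
    (hsG : ∀ ℓ (X : Matrix (Fin m) (Fin m) ℝ), Mle 0 X → Mle X G →
      Summable (fun i => Aℓ ℓ i * X ^ i))
    (hsN : ∀ ℓ, Summable (fun i => Aℓ ℓ (i + 1) * ∑ j ∈ Finset.range (i + 1), G ^ j))
    (X : ℕ → Matrix (Fin m) (Fin m) ℝ)
    (hX0 : X 0 = 0)
    (hXk : ∀ k, IsMinPolySol p (fun ℓ => ∑' i, Aℓ ℓ i * (X k) ^ i) (X (k + 1))) :
    ∀ k,
      ((1 : Matrix (Fin m) (Fin m) ℝ) -
          ∑ ℓ ∈ Finset.range (p + 1),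
            (∑' i, Aℓ ℓ i * G ^ i) * ∑ j ∈ Finset.range ℓ, G ^ j) *ᵥ
          ((G - X (k + 1)) *ᵥ 1) ≤
        (∑ ℓ ∈ Finset.range (p + 1),
            ∑' i, Aℓ ℓ (i + 1) * ∑ j ∈ Finset.range (i + 1), G ^ j) *ᵥ
          ((G - X k) *ᵥ 1) := by
  intro k
  have hG1 : G *ᵥ 1 ≤ 1 :=
    hG.mulVec_one_le hA0 hsum fun i => by simpa [mulVec, dotProduct] using hrow i
  have hsG' : ∀ ℓ, Summable fun i => Aℓ ℓ i * G ^ i := fun ℓ => hsG ℓ G hG.1 (.refl G)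
  have hGsplit : G = ∑ ℓ ∈ Finset.range (p + 1), (∑' i, Aℓ ℓ i * G ^ i) * G ^ ℓ :=
    hG.2.2.1.trans (hasSum_mul_pow_of_eq_sum_shift hcompat hsG').tsum_eq
  have hXG := iterate_nonneg_and_mle hAℓ0 hG.1 hGsplit hsG' hX0 hXk
  exact one_sub_mulVec_error_le hAℓ0 hG.1 hG1 (hXG k).1 (hXG k).2 (hXG (k + 1)).1
    (hXG (k + 1)).2 hGsplit (hXk k).2.1 hsG' hsN

/-- Theorem 3.4 of the paper: `M ε_{k+1} ≤ N ε_k`.  Here `A i` denotes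
`A_{i-1}`, `p = q+1 ≥ 0`, `Aℓ ℓ' i` denotes `A_{ℓ'-1, i}`, and `1` is the all-ones
vector. -/
theorem stmt4 (m : ℕ) (hm : 1 ≤ m) (p : ℕ)
    (A : ℕ → Matrix (Fin m) (Fin m) ℝ)
    (Aℓ : ℕ → ℕ → Matrix (Fin m) (Fin m) ℝ)
    (hA0 : ∀ i, Mle 0 (A i)) (hAℓ0 : ∀ ℓ i, Mle 0 (Aℓ ℓ i))
    (hsum : Summable A)
    (hrow : ∀ k, ∑ j, (∑' i, A i) k j ≤ 1)
    (hcompat : ∀ i, A i = ∑ ℓ ∈ Finset.range (p + 1),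
      if ℓ ≤ i then Aℓ ℓ (i - ℓ) else 0)
    (G : Matrix (Fin m) (Fin m) ℝ) (hG : IsMinSol A G)
    -- all series occurring converge entrywise:
    (hsG : ∀ ℓ (X : Matrix (Fin m) (Fin m) ℝ), Mle 0 X → Mle X G →
      Summable (fun i => Aℓ ℓ i * X ^ i))
    (hsN : ∀ ℓ, Summable (fun i => Aℓ ℓ (i + 1) * ∑ j ∈ Finset.range (i + 1), G ^ j))
    (X : ℕ → Matrix (Fin m) (Fin m) ℝ)
    (hX0 : X 0 = 0)
    (hXk : ∀ k, IsMinPolySol p (fun ℓ => ∑' i, Aℓ ℓ i * (X k) ^ i) (X (k + 1))) :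
    ∀ k,
      ((1 : Matrix (Fin m) (Fin m) ℝ) -
          ∑ ℓ ∈ Finset.range (p + 1),
            (∑' i, Aℓ ℓ i * G ^ i) * ∑ j ∈ Finset.range ℓ, G ^ j) *ᵥ
          ((G - X (k + 1)) *ᵥ 1) ≤
        (∑ ℓ ∈ Finset.range (p + 1),
            ∑' i, Aℓ ℓ (i + 1) * ∑ j ∈ Finset.range (i + 1), G ^ j) *ᵥ
          ((G - X k) *ᵥ 1) :=
  stmt4_general m p A Aℓ hA0 hAℓ0 hsum hrow hcompat G hG hsG hsN X hX0 hXk
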